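/- arXiv:2407.03579 — 2 statements merged into one kernel-verified Lean document; each statement's English description precedes it below -/
import Mathlib

section
/- Let G be a finitely generated subgroup of BiLip₊ᵇᵈ(ℝ) without global fixed points, let p ∈ [1, ∞), and let π : G → O(Lᵖ(ℝ)) be the associated Koopman representation, (π(g)ξ)(x) = ξ(g⁻¹(x))·(Dg⁻¹(x))^{1/p}. Then π has no nonzero invariant vectors: if ξ ∈ Lᵖ(ℝ) satisfies π(g)ξ = ξ for all g ∈ G, then ξ = 0 almost everywhere. -/
open MeasureTheory Filter
open scoped ENNReal NNReal Topology

/-- `f : ℝ → ℝ` is bi-Lipschitz with constant `L ≥ 1` if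
`L⁻¹|x−y| ≤ |f x − f y| ≤ L|x−y|` for all `x, y`. -/
def IsBiLipschitzWith (L : ℝ) (f : ℝ → ℝ) : Prop :=
  1 ≤ L ∧ ∀ x y : ℝ, L⁻¹ * |x - y| ≤ |f x - f y| ∧ |f x - f y| ≤ L * |x - y|

/-- `f` is bi-Lipschitz if it is bi-Lipschitz with some constant `L ≥ 1`. -/
def IsBiLipschitz (f : ℝ → ℝ) : Prop := ∃ L : ℝ, IsBiLipschitzWith L f

/-- The Lipschitz constant of `f`: the infimum of all `L ≥ 1` witnessing bi-Lipschitzness. -/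
noncomputable def lipConst (f : ℝ → ℝ) : ℝ := sInf {L : ℝ | IsBiLipschitzWith L f}

/-- `f` has bounded displacement if `sup_x |f x − x| < ∞`. -/
def HasBddDisplacement (f : ℝ → ℝ) : Prop := ∃ C : ℝ, ∀ x : ℝ, |f x - x| ≤ C

/-- Membership in `BiLip₊ᵇᵈ(ℝ)`: an orientation-preserving (strictly increasing)
bijection of `ℝ` which is bi-Lipschitz and has bounded displacement.
(A strictly monotone bijection of `ℝ` is automatically a homeomorphism.) -/
def MemBiLipBdd (f : Equiv.Perm ℝ) : Prop :=
  StrictMono f ∧ IsBiLipschitz f ∧ HasBddDisplacement f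


open Set

lemma fg_countable (H : Type*) [Group H] (h : Group.FG H) : Countable H := by
  classical
  obtain ⟨S, hS⟩ := h.out
  have : Countable (FreeGroup {x : H // x ∈ S}) :=
    FreeGroup.toWord_injective.countable
  have hsurj : Function.Surjective (FreeGroup.lift (fun a : {x : H // x ∈ S} => a.1)) := by
    rw [← MonoidHom.range_eq_top, FreeGroup.range_lift_eq_closure, Subtype.range_coe_subtype]
    simpa using hS
  exact hsurj.countable

lemma lipschitz_image_null {f : ℝ → ℝ} {K : ℝ≥0} (hf : LipschitzWith K f) {s : Set ℝ}
    (hs : volume s = 0) : volume (f '' s) = 0 := by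
  have h := hf.hausdorffMeasure_image_le (zero_le_one) s
  rw [← MeasureTheory.hausdorffMeasure_real] at *
  refine le_antisymm ?_ (zero_le)
  calc μH[1] (f '' s) ≤ (K : ℝ≥0∞) ^ (1:ℝ) * μH[1] s := h
  _ = 0 := by rw [hs, mul_zero]

lemma deriv_nonneg_of_monotone {f : ℝ → ℝ} (hf : Monotone f) (x : ℝ) : 0 ≤ deriv f x := by
  by_cases h : DifferentiableAt ℝ f x
  · have h1 : Tendsto (slope f x) (𝓝[>] x) (𝓝 (deriv f x)) :=
      (hasDerivAt_iff_tendsto_slope.1 h.hasDerivAt).mono_left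
        (nhdsWithin_mono x fun y hy => ne_of_gt hy)
    refine ge_of_tendsto h1 ?_
    filter_upwards [self_mem_nhdsWithin] with y hy
    have hxy : x < y := hy
    have : f x ≤ f y := hf hxy.le
    rw [slope_def_field]
    exact div_nonneg (by linarith) (by linarith)
  · simp [deriv_zero_of_not_differentiableAt h]

/-- Key change-of-variables invariance for a monotone Lipschitz injection and a
density satisfying the cocycle identity. -/
lemma key_cov {f : ℝ → ℝ} {K : ℝ≥0} (hlip : LipschitzWith K f) (hinj : Function.Injective f)
    (hmono : Monotone f) (F : ℝ → ℝ≥0∞)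
    (hae : ∀ᵐ x ∂(volume : Measure ℝ), F x = ENNReal.ofReal (deriv f x) * F (f x))
    {s : Set ℝ} (hs : MeasurableSet s) :
    ∫⁻ x in f '' s, F x = ∫⁻ x in s, F x := by
  set D := {x : ℝ | DifferentiableAt ℝ f x} with hDdef
  have hD : MeasurableSet D := measurableSet_of_differentiableAt ℝ f
  have hDfull : ∀ᵐ x ∂(volume : Measure ℝ), x ∈ D := hlip.ae_differentiableAt
  set t := s ∩ D with htdef
  have ht : MeasurableSet t := hs.inter hD
  have hst0 : volume (s \ t) = 0 := by
    have : s \ t ⊆ {x | ¬ x ∈ D} := fun x hx => hx.2 ∘ fun h => ⟨hx.1, h⟩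
    exact measure_mono_null this (by simpa [ae_iff] using hDfull)
  have himg0 : volume (f '' (s \ t)) = 0 := lipschitz_image_null hlip hst0
  have hf' : ∀ x ∈ t, HasFDerivWithinAt f
      ((1 : ℝ →L[ℝ] ℝ).smulRight (deriv f x)) t x := fun x hx =>
    (hx.2.hasDerivAt.hasFDerivAt).hasFDerivWithinAt
  have h1 := lintegral_image_eq_lintegral_abs_det_fderiv_mul volume ht hf' (hinj.injOn) F
  have h2 : ∫⁻ x in t, ENNReal.ofReal |((1 : ℝ →L[ℝ] ℝ).smulRight (deriv f x)).det| * F (f x)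
      = ∫⁻ x in t, F x := by
    refine lintegral_congr_ae (ae_restrict_of_ae ?_)
    filter_upwards [hae] with x hx
    rw [ContinuousLinearMap.smulRight_one_eq_toSpanSingleton, ContinuousLinearMap.det_toSpanSingleton,
      abs_of_nonneg (deriv_nonneg_of_monotone hmono x), ← hx]
  have e1 : ∫⁻ x in s, F x = ∫⁻ x in t, F x := by
    refine le_antisymm ?_ (lintegral_mono_set (Set.inter_subset_left))
    have : s ⊆ t ∪ (s \ t) := fun x hx => by
      by_cases h : x ∈ t
      · exact Or.inl h
      · exact Or.inr ⟨hx, h⟩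
    calc ∫⁻ x in s, F x ≤ ∫⁻ x in t ∪ (s \ t), F x := lintegral_mono_set this
    _ ≤ (∫⁻ x in t, F x) + (∫⁻ x in (s \ t), F x) :=
        le_trans (lintegral_mono' (Measure.restrict_union_le _ _) le_rfl)
          (le_of_eq (lintegral_add_measure _ _ _))
    _ = ∫⁻ x in t, F x := by rw [setLIntegral_measure_zero _ _ hst0, add_zero]
  have e2 : ∫⁻ x in f '' s, F x = ∫⁻ x in f '' t, F x := by
    refine le_antisymm ?_ (lintegral_mono_set (Set.image_mono Set.inter_subset_left))
    have : f '' s ⊆ f '' t ∪ f '' (s \ t) := by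
      rw [← Set.image_union]
      exact Set.image_mono fun x hx => by
        by_cases h : x ∈ t
        · exact Or.inl h
        · exact Or.inr ⟨hx, h⟩
    calc ∫⁻ x in f '' s, F x ≤ ∫⁻ x in f '' t ∪ f '' (s \ t), F x := lintegral_mono_set this
    _ ≤ (∫⁻ x in f '' t, F x) + (∫⁻ x in f '' (s \ t), F x) :=
        le_trans (lintegral_mono' (Measure.restrict_union_le _ _) le_rfl)
          (le_of_eq (lintegral_add_measure _ _ _))
    _ = ∫⁻ x in f '' t, F x := by rw [setLIntegral_measure_zero _ _ himg0, add_zero]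
  rw [e1, e2, h1, h2]


/-- Let `G ≤ BiLip₊ᵇᵈ(ℝ)` be finitely generated without global fixed
points, and `p ∈ [1, ∞)`. If `ξ ∈ Lᵖ(ℝ)` is invariant under the Koopman representation,
i.e. `ξ(g⁻¹(x))·(Dg⁻¹(x))^{1/p} = ξ(x)` almost everywhere for every `g ∈ G`, then `ξ = 0`
almost everywhere. -/
theorem statement7 (G : Subgroup (Equiv.Perm ℝ)) (hFG : Group.FG G)
    (hBL : ∀ g ∈ G, MemBiLipBdd g)
    (hNF : ¬ ∃ x₀ : ℝ, ∀ g ∈ G, g x₀ = x₀)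
    (p : ℝ≥0∞) [Fact (1 ≤ p)] (hp : p ≠ ∞)
    (ξ : Lp ℝ p (volume : Measure ℝ))
    (hinv : ∀ g ∈ G,
      (fun x : ℝ => ξ (g⁻¹ x) * (deriv (⇑g⁻¹) x) ^ (1 / p.toReal)) =ᵐ[volume] ⇑ξ) :
    ⇑ξ =ᵐ[volume] 0 := by
  have hp1 : (1 : ℝ≥0∞) ≤ p := Fact.out
  have hp0 : p ≠ 0 := fun h => by simp [h] at hp1
  set p' : ℝ := p.toReal with hp'def
  have hp'pos : 0 < p' := ENNReal.toReal_pos hp0 hp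
  -- the density
  set F : ℝ → ℝ≥0∞ := fun x => ENNReal.ofReal (|ξ x| ^ p') with hFdef
  have hFeq : ∀ x : ℝ, F x = (‖ξ x‖₊ : ℝ≥0∞) ^ p' := fun x => by
    show ENNReal.ofReal (|ξ x| ^ p') = (‖ξ x‖₊ : ℝ≥0∞) ^ p'
    rw [← enorm_eq_nnnorm, Real.enorm_eq_ofReal_abs,
      ENNReal.ofReal_rpow_of_nonneg (abs_nonneg _) hp'pos.le]
  -- total mass is finite
  have htot : ∫⁻ x, F x < ∞ := by
    simp only [hFeq]
    exact lintegral_rpow_enorm_lt_top_of_eLpNorm_lt_top hp0 hp (Lp.eLpNorm_lt_top ξ)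
  -- Lipschitz data for each element of G
  have hLip : ∀ g ∈ G, ∃ K : ℝ≥0, LipschitzWith K ⇑g := by
    intro g hg
    obtain ⟨L, hL1, hL⟩ := (hBL g hg).2.1
    refine ⟨Real.toNNReal L, LipschitzWith.of_dist_le_mul fun x y => ?_⟩
    rw [Real.dist_eq, Real.dist_eq, Real.coe_toNNReal L (zero_le_one.trans hL1)]
    exact (hL x y).2
  -- invariance of the density integral
  have hINV : ∀ g ∈ G, ∀ s : Set ℝ, MeasurableSet s →
      ∫⁻ x in ⇑g '' s, F x = ∫⁻ x in s, F x := by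
    intro g hg s hs
    obtain ⟨K, hK⟩ := hLip g hg
    have hmono : Monotone ⇑g := (hBL g hg).1.monotone
    have hae : ∀ᵐ x ∂(volume : Measure ℝ), F x = ENNReal.ofReal (deriv ⇑g x) * F (⇑g x) := by
      have h := hinv g⁻¹ (inv_mem hg)
      simp only [inv_inv] at h
      filter_upwards [h] with x hx
      have hd : 0 ≤ deriv (⇑g) x := deriv_nonneg_of_monotone hmono x
      have hx' : ξ x = ξ (g x) * (deriv (⇑g) x) ^ (1 / p') := hx.symm
      rw [hFdef]
      simp only
      rw [hx', abs_mul, abs_of_nonneg (Real.rpow_nonneg hd _),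
        Real.mul_rpow (abs_nonneg _) (Real.rpow_nonneg hd _),
        ← Real.rpow_mul hd, one_div_mul_cancel hp'pos.ne', Real.rpow_one,
        mul_comm (|ξ (g x)| ^ p'), ENNReal.ofReal_mul hd]
    exact key_cov hK g.injective hmono F hae hs
  -- vanishing on moved intervals
  have hIco : ∀ g ∈ G, ∀ y : ℝ, y < g y → ∫⁻ x in Ico y (g y), F x = 0 := by
    intro g hg y hy
    have hsm : StrictMono ⇑g := (hBL g hg).1
    set e : ℝ ≃o ℝ := StrictMono.orderIsoOfSurjective ⇑g hsm g.surjective with hedef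
    have he : ∀ z : ℝ, e z = g z := fun z => by
      rw [hedef, StrictMono.coe_orderIsoOfSurjective]
    set a : ℕ → ℝ := fun n => (⇑g)^[n] y with hadef
    have ha : ∀ n, a (n + 1) = g (a n) := fun n => Function.iterate_succ_apply' _ _ _
    have hlt : ∀ n, a n < a (n + 1) := by
      intro n
      induction n with
      | zero => simpa [hadef] using hy
      | succ n ih => rw [ha, ha]; exact hsm ih
    have hamono : StrictMono a := strictMono_nat_of_lt_succ hlt
    have himg : ∀ n, ⇑g '' Ico (a n) (a (n + 1)) = Ico (a (n + 1)) (a (n + 2)) := by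
      intro n
      have : ⇑g '' Ico (a n) (a (n + 1)) = ⇑e '' Ico (a n) (a (n + 1)) := by
        rw [StrictMono.coe_orderIsoOfSurjective]
      rw [this, OrderIso.image_Ico, he, he, ← ha, ← ha]
    have hconst : ∀ n, ∫⁻ x in Ico (a n) (a (n + 1)), F x
        = ∫⁻ x in Ico (a 0) (a 1), F x := by
      intro n
      induction n with
      | zero => rfl
      | succ n ih =>
        rw [← ih, ← himg n, hINV g hg _ measurableSet_Ico]
    -- sum over disjoint intervals
    set ν : Measure ℝ := volume.withDensity F with hνdef
    have hν : ∀ b c : ℝ, ν (Ico b c) = ∫⁻ x in Ico b c, F x := fun b c =>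
      withDensity_apply F measurableSet_Ico
    have hνtot : ν univ < ∞ := by
      rw [hνdef, withDensity_apply F MeasurableSet.univ, Measure.restrict_univ]
      exact htot
    have hdisj : Pairwise (Function.onFun Disjoint fun n => Ico (a n) (a (n + 1))) := by
      intro m n hmn
      rcases hmn.lt_or_gt with h | h
      · rw [Function.onFun, Set.Ico_disjoint_Ico]
        exact le_trans (min_le_left _ _) (le_trans (hamono.monotone h) (le_max_right _ _))
      · rw [Function.onFun, Set.Ico_disjoint_Ico]
        exact le_trans (min_le_right _ _) (le_trans (hamono.monotone h) (le_max_left _ _))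
    have hsum : ∑' n : ℕ, ν (Ico (a n) (a (n + 1))) < ∞ := by
      rw [← measure_iUnion hdisj fun n => measurableSet_Ico]
      exact lt_of_le_of_lt (measure_mono (subset_univ _)) hνtot
    have hconst' : ∀ n : ℕ, ν (Ico (a n) (a (n + 1))) = ν (Ico (a 0) (a 1)) := fun n => by
      rw [hν, hν, hconst]
    by_contra hne
    have h0 : ν (Ico (a 0) (a 1)) ≠ 0 := by
      rw [hν]
      simpa [hadef, hy] using hne
    rw [tsum_congr hconst', ENNReal.tsum_const_eq_top_of_ne_zero h0] at hsum
    exact (lt_irrefl _ hsum).elim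
  -- covering: every point lies in some interval [q, g q)
  push_neg at hNF
  have hcov : ∀ x : ℝ, ∃ g : G, ∃ q : ℚ, (q : ℝ) ≤ x ∧ x < (g : Equiv.Perm ℝ) (q : ℝ) := by
    intro x
    obtain ⟨g, hg, hgx⟩ := hNF x
    have hmoved : ∃ h : Equiv.Perm ℝ, h ∈ G ∧ x < h x := by
      rcases lt_or_gt_of_ne hgx with hlt | hgt
      · refine ⟨g⁻¹, inv_mem hg, ?_⟩
        have := (hBL g⁻¹ (inv_mem hg)).1 hlt
        simpa using this
      · exact ⟨g, hg, hgt⟩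
    obtain ⟨h, hh, hx⟩ := hmoved
    obtain ⟨L, hL1, hL⟩ := (hBL h hh).2.1
    have hLpos : 0 < L := lt_of_lt_of_le zero_lt_one hL1
    have hδ : 0 < (h x - x) / L := div_pos (by linarith) hLpos
    obtain ⟨q, hq1, hq2⟩ := exists_rat_btwn (show x - (h x - x) / L < x by linarith)
    refine ⟨⟨h, hh⟩, q, hq2.le, ?_⟩
    have hbd : |h x - h (q : ℝ)| ≤ L * |x - (q : ℝ)| := (hL x q).2
    have h1 : |x - (q : ℝ)| = x - q := abs_of_nonneg (by linarith)
    have h2 : (x - (q : ℝ)) * L < h x - x := (lt_div_iff₀ hLpos).1 (by linarith)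
    have h3 : h x - h (q : ℝ) ≤ L * (x - (q : ℝ)) := by
      rw [h1] at hbd; exact le_trans (le_abs_self _) hbd
    show x < h (q : ℝ)
    nlinarith
  -- conclusion
  have cG : Countable ↥G := fg_countable _ hFG
  have hAEmF : AEMeasurable F (volume : Measure ℝ) := by
    have hφ : Measurable fun a : ℝ => ENNReal.ofReal (|a| ^ p') :=
      ENNReal.measurable_ofReal.comp
        ((continuous_abs.rpow_const (fun a => Or.inr hp'pos.le)).measurable)
    exact hφ.comp_aemeasurable (Lp.aestronglyMeasurable ξ).aemeasurable
  have hTnull : ∀ i : ↥G × ℚ,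
      volume ({x : ℝ | ¬ (ξ x = 0)} ∩ Ico ((i.2 : ℝ)) ((i.1 : Equiv.Perm ℝ) (i.2 : ℝ))) = 0 := by
    rintro ⟨g, q⟩
    by_cases hlt : (q : ℝ) < (g : Equiv.Perm ℝ) (q : ℝ)
    · have h0 := hIco (g : Equiv.Perm ℝ) g.2 (q : ℝ) hlt
      have h00 : ∀ᵐ x ∂(volume.restrict (Ico (q : ℝ) ((g : Equiv.Perm ℝ) (q : ℝ)))),
          F x = 0 := (lintegral_eq_zero_iff' hAEmF.restrict).1 h0
      have hae0 : ∀ᵐ x ∂(volume.restrict (Ico (q : ℝ) ((g : Equiv.Perm ℝ) (q : ℝ)))),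
          ξ x = 0 := by
        filter_upwards [h00] with x hx
        have hx' : |ξ x| ^ p' = 0 := by
          have := ENNReal.ofReal_eq_zero.1 hx
          exact le_antisymm this (Real.rpow_nonneg (abs_nonneg _) _)
        have := (Real.rpow_eq_zero_iff_of_nonneg (abs_nonneg _)).1 hx'
        exact abs_eq_zero.1 this.1
      rw [← Measure.restrict_apply' measurableSet_Ico]
      exact ae_iff.1 hae0
    · rw [Ico_eq_empty hlt]
      simp
  have hsub : {x : ℝ | ¬ (ξ x = 0)} ⊆ ⋃ i : ↥G × ℚ,
      ({x : ℝ | ¬ (ξ x = 0)} ∩ Ico ((i.2 : ℝ)) ((i.1 : Equiv.Perm ℝ) (i.2 : ℝ))) := by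
    intro x hx
    obtain ⟨g, q, hq1, hq2⟩ := hcov x
    exact mem_iUnion.2 ⟨(g, q), hx, hq1, hq2⟩
  have hfinal : volume {x : ℝ | ¬ (ξ x = 0)} = 0 := by
    refine le_antisymm ?_ (zero_le)
    calc volume {x : ℝ | ¬ (ξ x = 0)}
        ≤ ∑' i : ↥G × ℚ,
          volume ({x : ℝ | ¬ (ξ x = 0)} ∩ Ico ((i.2 : ℝ)) ((i.1 : Equiv.Perm ℝ) (i.2 : ℝ))) :=
          (measure_mono hsub).trans (measure_iUnion_le _)
    _ = 0 := by simp [hTnull]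
  have hae : ∀ᵐ x ∂(volume : Measure ℝ), ξ x = 0 := ae_iff.2 hfinal
  filter_upwards [hae] with x hx
  simp [hx]
end

section
/- Let G be a finitely generated subgroup of BiLip₊ᵇᵈ(ℝ) without global fixed points, and suppose G satisfies Property (T). Then for every finite generating set S ⊂ G and every ε > 0 such that (S, ε) is a Kazhdan pair for G, one has ε ≤ max_{g∈S} √2·(1 − Lip(g)^{−1/2})^{1/2}. -/
open MeasureTheory Filter Set
open scoped ENNReal NNReal Topology

/-- `(S, ε)` is a Kazhdan pair for `G`: `S` is finite, `ε > 0`, and for every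
unitary representation `π` of `G` on a complex Hilbert space `H` and every vector `ξ`
orthogonal to the subspace of `π`-invariant vectors,
`max_{g ∈ S} ‖π(g)ξ − ξ‖ ≥ ε‖ξ‖`. -/
def IsKazhdanPair (G : Type) [Group G] (S : Set G) (ε : ℝ) : Prop :=
  S.Finite ∧ 0 < ε ∧
    ∀ (H : Type) [NormedAddCommGroup H] [InnerProductSpace ℂ H] [CompleteSpace H]
      (π : G →* (H ≃ₗᵢ[ℂ] H)) (ξ : H),
      (∀ η : H, (∀ g : G, π g η = η) → inner ℂ ξ η = (0 : ℂ)) →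
      ε * ‖ξ‖ ≤ ⨆ g ∈ S, ‖π g ξ - ξ‖

/-- A group has Property (T) if it admits a Kazhdan pair. -/
def HasPropertyT (G : Type) [Group G] : Prop :=
  ∃ (S : Set G) (ε : ℝ), IsKazhdanPair G S ε


noncomputable section

def Nice (f : Equiv.Perm ℝ) : Prop :=
  StrictMono ⇑f ∧ ∃ L : ℝ≥0, LipschitzWith L ⇑f ∧ LipschitzWith L ⇑f.symm

namespace Nice

variable {f g : Equiv.Perm ℝ}

theorem continuous (hf : Nice f) : Continuous ⇑f := by
  obtain ⟨-, L, hL, -⟩ := hf; exact hL.continuous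

theorem continuous_symm (hf : Nice f) : Continuous ⇑f.symm := by
  obtain ⟨-, L, -, hL⟩ := hf; exact hL.continuous

theorem measurable (hf : Nice f) : Measurable ⇑f := hf.continuous.measurable

theorem measurable_symm (hf : Nice f) : Measurable ⇑f.symm :=
  hf.continuous_symm.measurable

/-- `f` as a measurable equivalence. -/
def mEquiv (hf : Nice f) : ℝ ≃ᵐ ℝ :=
  { toEquiv := f
    measurable_toFun := hf.measurable
    measurable_invFun := hf.measurable_symm }

@[simp] theorem coe_mEquiv (hf : Nice f) : ⇑hf.mEquiv = ⇑f := rfl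

theorem one : Nice (1 : Equiv.Perm ℝ) := by
  refine ⟨fun a b h => h, 1, ?_, ?_⟩ <;>
    · exact LipschitzWith.id

theorem inv (hf : Nice f) : Nice f⁻¹ := by
  obtain ⟨hm, L, h1, h2⟩ := hf
  refine ⟨?_, L, h2, h1⟩
  intro a b hab
  have h := hm.lt_iff_lt (a := f.symm a) (b := f.symm b)
  simp only [Equiv.apply_symm_apply] at h
  exact h.mp hab

theorem mul (hf : Nice f) (hg : Nice g) : Nice (f * g) := by
  obtain ⟨hfm, L, hf1, hf2⟩ := hf
  obtain ⟨hgm, M, hg1, hg2⟩ := hg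
  refine ⟨?_, L * M, ?_, ?_⟩
  · intro a b hab
    exact hfm (hgm hab)
  · have : ⇑(f * g) = ⇑f ∘ ⇑g := rfl
    rw [this]; exact hf1.comp hg1
  · have : ⇑(f * g).symm = ⇑g.symm ∘ ⇑f.symm := rfl
    rw [this, mul_comm]; exact hg2.comp hf2

end Nice

theorem lipschitz_volume_image_le {L : ℝ≥0} {h : ℝ → ℝ} (hh : LipschitzWith L h)
    (s : Set ℝ) : volume (h '' s) ≤ (L : ℝ≥0∞) * volume s := by
  have := hh.hausdorffMeasure_image_le (d := 1) zero_le_one s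
  rwa [MeasureTheory.hausdorffMeasure_real, ENNReal.rpow_one] at this

namespace Nice

variable {f g : Equiv.Perm ℝ}

/-- The pushforward of Lebesgue measure under `f`. -/
def nu (f : Equiv.Perm ℝ) : Measure ℝ := Measure.map ⇑f volume

theorem sigmaFinite_nu (hf : Nice f) : SigmaFinite (nu f) :=
  hf.mEquiv.sigmaFinite_map

theorem nu_apply (hf : Nice f) {s : Set ℝ} (hs : MeasurableSet s) :
    nu f s = volume (⇑f.symm '' s) := by
  rw [nu, Measure.map_apply hf.measurable hs]
  congr 1
  rw [Equiv.image_eq_preimage_symm, Equiv.symm_symm]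

theorem nu_le (hf : Nice f) {L : ℝ≥0} (hL : LipschitzWith L ⇑f.symm) :
    nu f ≤ (L : ℝ≥0∞) • volume := by
  refine Measure.le_iff.2 fun s hs => ?_
  rw [nu_apply hf hs, Measure.smul_apply, smul_eq_mul]
  exact lipschitz_volume_image_le hL s

theorem le_nu (hf : Nice f) {L : ℝ≥0} (hL : LipschitzWith L ⇑f) :
    volume ≤ (L : ℝ≥0∞) • nu f := by
  refine Measure.le_iff.2 fun s hs => ?_
  rw [Measure.smul_apply, smul_eq_mul, nu, Measure.map_apply hf.measurable hs]
  calc volume s = volume (⇑f '' (⇑f ⁻¹' s)) := by rw [Equiv.image_preimage]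
    _ ≤ (L : ℝ≥0∞) * volume (⇑f ⁻¹' s) := lipschitz_volume_image_le hL _

theorem nu_ac (hf : Nice f) : nu f ≪ volume := by
  obtain ⟨-, L, -, hL⟩ := id hf
  refine Measure.AbsolutelyContinuous.mk fun s hs h0 => ?_
  refine le_antisymm ?_ zero_le
  calc nu f s ≤ (L : ℝ≥0∞) * volume s := by
        simpa using Measure.le_iff.1 (nu_le hf hL) s hs
    _ = 0 := by rw [h0, mul_zero]

theorem ac_nu (hf : Nice f) : volume ≪ nu f := by
  obtain ⟨-, L, hL, -⟩ := id hf
  refine Measure.AbsolutelyContinuous.mk fun s hs h0 => ?_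
  refine le_antisymm ?_ zero_le
  calc volume s ≤ (L : ℝ≥0∞) * nu f s := by
        simpa using Measure.le_iff.1 (le_nu hf hL) s hs
    _ = 0 := by rw [h0, mul_zero]

theorem qmp (hf : Nice f) : Measure.QuasiMeasurePreserving ⇑f volume volume :=
  ⟨hf.measurable, nu_ac hf⟩

theorem qmp_symm (hf : Nice f) : Measure.QuasiMeasurePreserving ⇑f.symm volume volume :=
  ⟨hf.measurable_symm, nu_ac hf.inv⟩

/-- The Radon–Nikodym derivative of `nu f` with respect to Lebesgue measure. -/
def w (f : Equiv.Perm ℝ) : ℝ → ℝ≥0∞ := (nu f).rnDeriv volume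

theorem measurable_w : Measurable (w f) := Measure.measurable_rnDeriv _ _

theorem withDensity_w (hf : Nice f) : volume.withDensity (w f) = nu f := by
  have := hf.sigmaFinite_nu
  exact Measure.withDensity_rnDeriv_eq _ _ (nu_ac hf)

theorem w_lt_top (hf : Nice f) : ∀ᵐ x, w f x < ∞ := by
  have := hf.sigmaFinite_nu
  exact Measure.rnDeriv_lt_top _ _

theorem w_le (hf : Nice f) {L : ℝ≥0} (hL0 : L ≠ 0) (hL : LipschitzWith L ⇑f.symm) :
    ∀ᵐ x, w f x ≤ (L : ℝ≥0∞) := by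
  have := hf.sigmaFinite_nu
  have h1 : (L⁻¹ : ℝ≥0) • nu f ≤ volume := by
    refine Measure.le_iff.2 fun s hs => ?_
    rw [Measure.smul_apply]
    calc (L⁻¹ : ℝ≥0) • nu f s = (L : ℝ≥0∞)⁻¹ * nu f s := by
          rw [ENNReal.smul_def, ENNReal.coe_inv hL0, smul_eq_mul]
      _ ≤ (L : ℝ≥0∞)⁻¹ * ((L : ℝ≥0∞) * volume s) := by
          gcongr
          simpa using Measure.le_iff.1 (nu_le hf hL) s hs
      _ = volume s := by
          rw [← mul_assoc, ENNReal.inv_mul_cancel (by exact_mod_cast hL0)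
            ENNReal.coe_ne_top, one_mul]
  have h2 := Measure.rnDeriv_le_one_of_le h1
  have h3 := Measure.rnDeriv_smul_left' (nu f) volume L⁻¹
  filter_upwards [h2, h3] with x hx2 hx3
  have hx : (L : ℝ≥0∞)⁻¹ * w f x ≤ 1 := by
    have := hx3 ▸ hx2
    simpa [ENNReal.smul_def, ENNReal.coe_inv hL0, w] using this
  calc w f x = (L : ℝ≥0∞) * ((L : ℝ≥0∞)⁻¹ * w f x) := by
        rw [← mul_assoc, ENNReal.mul_inv_cancel (by exact_mod_cast hL0)
          ENNReal.coe_ne_top, one_mul]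
    _ ≤ (L : ℝ≥0∞) * 1 := by gcongr
    _ = L := mul_one _

theorem le_w (hf : Nice f) {L : ℝ≥0} (hL0 : L ≠ 0) (hL : LipschitzWith L ⇑f) :
    ∀ᵐ x, (L : ℝ≥0∞)⁻¹ ≤ w f x := by
  have := hf.sigmaFinite_nu
  have h1 : (L⁻¹ : ℝ≥0) • volume ≤ nu f := by
    refine Measure.le_iff.2 fun s hs => ?_
    rw [Measure.smul_apply]
    calc (L⁻¹ : ℝ≥0) • volume s = (L : ℝ≥0∞)⁻¹ * volume s := by
          rw [ENNReal.smul_def, ENNReal.coe_inv hL0, smul_eq_mul]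
      _ ≤ (L : ℝ≥0∞)⁻¹ * ((L : ℝ≥0∞) * nu f s) := by
          gcongr
          simpa using Measure.le_iff.1 (le_nu hf hL) s hs
      _ = nu f s := by
          rw [← mul_assoc, ENNReal.inv_mul_cancel (by exact_mod_cast hL0)
            ENNReal.coe_ne_top, one_mul]
  have h2 := Measure.rnDeriv_le_one_of_le h1
  have h3 := Measure.rnDeriv_smul_left' volume (nu f) L⁻¹
  have h4 := Measure.inv_rnDeriv (nu_ac hf)
  have h2' : ∀ᵐ x, volume.rnDeriv (nu f) x ≤ (L : ℝ≥0∞) :=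
    (ac_nu hf).ae_le ?aux
  case aux =>
    filter_upwards [h2, h3] with x hx2 hx3
    have := hx3 ▸ hx2
    simp only [Pi.smul_apply, Pi.one_apply, ENNReal.smul_def, smul_eq_mul, ENNReal.coe_inv hL0] at this
    calc volume.rnDeriv (nu f) x
        = (L : ℝ≥0∞) * ((L : ℝ≥0∞)⁻¹ * volume.rnDeriv (nu f) x) := by
          rw [← mul_assoc, ENNReal.mul_inv_cancel (by exact_mod_cast hL0)
            ENNReal.coe_ne_top, one_mul]
      _ ≤ (L : ℝ≥0∞) * 1 := by gcongr
      _ = L := mul_one _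
  have h4' : ∀ᵐ x, (w f x)⁻¹ = volume.rnDeriv (nu f) x := (ac_nu hf).ae_le h4
  filter_upwards [h2', h4'] with x hx2 hx4
  have : (w f x)⁻¹ ≤ (L : ℝ≥0∞) := hx4 ▸ hx2
  calc (L : ℝ≥0∞)⁻¹ ≤ ((w f x)⁻¹)⁻¹ := ENNReal.inv_le_inv.2 this
    _ = w f x := inv_inv _

theorem map_withDensity (hf : Nice f) {D : ℝ → ℝ≥0∞} (hD : Measurable D) (μ : Measure ℝ) :
    Measure.map ⇑f (μ.withDensity D) = (Measure.map ⇑f μ).withDensity (D ∘ ⇑f.symm) := by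
  ext s hs
  rw [Measure.map_apply hf.measurable hs,
    withDensity_apply _ (hs.preimage hf.measurable), withDensity_apply _ hs,
    setLIntegral_map hs (hD.comp hf.measurable_symm) hf.measurable]
  refine setLIntegral_congr_fun (hs.preimage hf.measurable) ?_
  exact fun x _ => by simp

theorem w_cocycle (hf : Nice f) (hg : Nice g) :
    w (f * g) =ᵐ[volume] fun x => w f x * w g (f.symm x) := by
  have hW : Measurable fun x => w f x * w g (f.symm x) :=
    measurable_w.mul (measurable_w.comp hf.measurable_symm)
  have key : nu (f * g) = volume.withDensity fun x => w f x * w g (f.symm x) := by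
    have h1 : ⇑(f * g) = ⇑f ∘ ⇑g := rfl
    rw [nu, h1, ← Measure.map_map hf.measurable hg.measurable,
      show Measure.map ⇑g volume = nu g from rfl, ← withDensity_w hg,
      map_withDensity hf measurable_w,
      show Measure.map ⇑f volume = nu f from rfl, ← withDensity_w hf,
      ← withDensity_mul _ measurable_w (measurable_w.comp hf.measurable_symm)]
    rfl
  have : w (f * g) =ᵐ[volume] (volume.withDensity
      fun x => w f x * w g (f.symm x)).rnDeriv volume := by
    rw [w, key]
  exact this.trans (Measure.rnDeriv_withDensity volume hW)

end Nice

namespace Nice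

variable {f g : Equiv.Perm ℝ}

/-- The square root of the Radon–Nikodym weight. -/
def sw (f : Equiv.Perm ℝ) : ℝ → ℝ := fun x => Real.sqrt (w f x).toReal

theorem measurable_sw : Measurable (sw f) :=
  Real.continuous_sqrt.measurable.comp measurable_w.ennreal_toReal

theorem sw_nonneg (x : ℝ) : 0 ≤ sw f x := Real.sqrt_nonneg _

/-- The weighted Koopman operator on functions. -/
def Phi (f : Equiv.Perm ℝ) (u : ℝ → ℂ) : ℝ → ℂ := fun x => (sw f x : ℂ) * u (f.symm x)

theorem enorm_sw_sq (hx : w f x < ∞) :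
    ((‖(sw f x : ℂ)‖₊ : ℝ≥0∞)) ^ (2:ℝ) = w f x := by
  rw [Complex.nnnorm_real, ← enorm_eq_nnnorm, Real.enorm_eq_ofReal (sw_nonneg x)]
  rw [ENNReal.ofReal_rpow_of_nonneg (sw_nonneg x) (by norm_num)]
  rw [Real.rpow_two, sw, Real.sq_sqrt ENNReal.toReal_nonneg, ENNReal.ofReal_toReal hx.ne]

theorem phi_congr (hf : Nice f) {u v : ℝ → ℂ} (h : u =ᵐ[volume] v) :
    Phi f u =ᵐ[volume] Phi f v := by
  filter_upwards [(qmp_symm hf).ae h] with x hx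
  simp only [Phi, hx]

theorem lintegral_Phi (hf : Nice f) {u : ℝ → ℂ} (hu : AEStronglyMeasurable u volume) :
    ∫⁻ x, (‖Phi f u x‖₊ : ℝ≥0∞) ^ (2:ℝ) = ∫⁻ x, (‖u x‖₊ : ℝ≥0∞) ^ (2:ℝ) := by
  have husymm : AEStronglyMeasurable (u ∘ ⇑f.symm) volume :=
    hu.comp_quasiMeasurePreserving (qmp_symm hf)
  have hG : AEMeasurable (fun x => (‖u (f.symm x)‖₊ : ℝ≥0∞) ^ (2:ℝ)) volume := by
    exact (ENNReal.continuous_rpow_const.measurable.comp_aemeasurable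
      husymm.aemeasurable.nnnorm.coe_nnreal_ennreal)
  have step1 : ∫⁻ x, (‖Phi f u x‖₊ : ℝ≥0∞) ^ (2:ℝ)
      = ∫⁻ x, (w f * fun y => (‖u (f.symm y)‖₊ : ℝ≥0∞) ^ (2:ℝ)) x := by
    refine lintegral_congr_ae ?_
    filter_upwards [w_lt_top hf] with x hx
    simp only [Phi, Pi.mul_apply, nnnorm_mul, ENNReal.coe_mul]
    rw [ENNReal.mul_rpow_of_nonneg _ _ (by norm_num), enorm_sw_sq hx]
  rw [step1, ← lintegral_withDensity_eq_lintegral_mul₀ measurable_w.aemeasurable hG,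
    withDensity_w hf]
  have hqmp2 : Measure.QuasiMeasurePreserving ⇑f.symm (Measure.map ⇑f volume) volume := by
    refine ⟨hf.measurable_symm, ?_⟩
    rw [Measure.map_map hf.measurable_symm hf.measurable]
    rw [show ⇑f.symm ∘ ⇑f = id from funext fun x => f.symm_apply_apply x, Measure.map_id]
  have hG2 : AEMeasurable (fun x => (‖u (f.symm x)‖₊ : ℝ≥0∞) ^ (2:ℝ))
      (Measure.map ⇑f volume) := by
    have base : AEMeasurable (fun y => (‖u y‖₊ : ℝ≥0∞) ^ (2:ℝ)) volume :=
      ENNReal.continuous_rpow_const.measurable.comp_aemeasurable hu.aemeasurable.nnnorm.coe_nnreal_ennreal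
    exact base.comp_quasiMeasurePreserving hqmp2
  have hmap : ∫⁻ a, (‖u (f.symm a)‖₊ : ℝ≥0∞) ^ (2:ℝ) ∂Measure.map ⇑f volume
      = ∫⁻ x, (‖u (f.symm (f x))‖₊ : ℝ≥0∞) ^ (2:ℝ) :=
    lintegral_map' hG2 hf.measurable.aemeasurable
  rw [show nu f = Measure.map ⇑f volume from rfl, hmap]
  simp

theorem eLpNorm_Phi (hf : Nice f) {u : ℝ → ℂ} (hu : AEStronglyMeasurable u volume) :
    eLpNorm (Phi f u) 2 volume = eLpNorm u 2 volume := by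
  have h2 : ((2:ℝ≥0∞)).toReal = (2:ℝ) := by simp
  rw [eLpNorm_eq_lintegral_rpow_enorm_toReal two_ne_zero ENNReal.ofNat_ne_top,
    eLpNorm_eq_lintegral_rpow_enorm_toReal two_ne_zero ENNReal.ofNat_ne_top, h2]
  simp only [enorm_eq_nnnorm]
  rw [lintegral_Phi hf hu]

theorem aestronglyMeasurable_Phi (hf : Nice f) {u : ℝ → ℂ}
    (hu : AEStronglyMeasurable u volume) : AEStronglyMeasurable (Phi f u) volume := by
  refine AEStronglyMeasurable.mul ?_ (hu.comp_quasiMeasurePreserving (qmp_symm hf))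
  exact (Complex.measurable_ofReal.comp measurable_sw).aestronglyMeasurable

theorem memLp_Phi (hf : Nice f) {u : ℝ → ℂ} (hu : MemLp u 2 volume) :
    MemLp (Phi f u) 2 volume :=
  ⟨aestronglyMeasurable_Phi hf hu.1, by rw [eLpNorm_Phi hf hu.1]; exact hu.2⟩

/-- The weighted Koopman operator on `L²`. -/
def U0 (f : Equiv.Perm ℝ) (hf : Nice f) (ξ : Lp ℂ 2 (volume : Measure ℝ)) :
    Lp ℂ 2 (volume : Measure ℝ) :=
  (memLp_Phi hf (Lp.memLp ξ)).toLp _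

theorem coeFn_U0 (hf : Nice f) (ξ : Lp ℂ 2 (volume : Measure ℝ)) :
    ⇑(U0 f hf ξ) =ᵐ[volume] Phi f ⇑ξ := MemLp.coeFn_toLp _

theorem U0_add (hf : Nice f) (ξ η : Lp ℂ 2 (volume : Measure ℝ)) :
    U0 f hf (ξ + η) = U0 f hf ξ + U0 f hf η := by
  have hsum : Phi f ⇑(ξ + η) =ᵐ[volume] Phi f ⇑ξ + Phi f ⇑η := by
    refine (phi_congr hf (Lp.coeFn_add ξ η)).trans ?_
    refine Filter.Eventually.of_forall fun x => ?_
    simp only [Phi, Pi.add_apply, mul_add]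
  rw [show U0 f hf ξ + U0 f hf η
      = ((memLp_Phi hf (Lp.memLp ξ)).add (memLp_Phi hf (Lp.memLp η))).toLp _ from
      (MemLp.toLp_add _ _).symm]
  exact MemLp.toLp_congr _ _ hsum

theorem U0_smul (hf : Nice f) (c : ℂ) (ξ : Lp ℂ 2 (volume : Measure ℝ)) :
    U0 f hf (c • ξ) = c • U0 f hf ξ := by
  have hsm : Phi f ⇑(c • ξ) =ᵐ[volume] c • Phi f ⇑ξ := by
    refine (phi_congr hf (Lp.coeFn_smul c ξ)).trans ?_
    refine Filter.Eventually.of_forall fun x => ?_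
    simp only [Phi, Pi.smul_apply, smul_eq_mul]
    ring
  rw [show c • U0 f hf ξ = ((memLp_Phi hf (Lp.memLp ξ)).const_smul c).toLp _ from
      (MemLp.toLp_const_smul _ _).symm]
  exact MemLp.toLp_congr _ _ hsm

theorem norm_U0 (hf : Nice f) (ξ : Lp ℂ 2 (volume : Measure ℝ)) :
    ‖U0 f hf ξ‖ = ‖ξ‖ := by
  rw [U0, Lp.norm_toLp, eLpNorm_Phi hf (Lp.aestronglyMeasurable ξ), Lp.norm_def]

theorem U0_congr_perm {f g : Equiv.Perm ℝ} (h : f = g) (hf : Nice f) (hg : Nice g)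
    (ξ : Lp ℂ 2 (volume : Measure ℝ)) : U0 f hf ξ = U0 g hg ξ := by subst h; rfl

theorem w_one : w (1 : Equiv.Perm ℝ) =ᵐ[volume] 1 := by
  have : nu (1 : Equiv.Perm ℝ) = volume := by
    rw [nu, show ⇑(1 : Equiv.Perm ℝ) = id from rfl, Measure.map_id]
  rw [w, this]
  exact Measure.rnDeriv_self _

theorem U0_one (ξ : Lp ℂ 2 (volume : Measure ℝ)) : U0 1 Nice.one ξ = ξ := by
  have h : Phi 1 ⇑ξ =ᵐ[volume] ⇑ξ := by
    filter_upwards [w_one] with x hx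
    simp only [Phi, sw, hx, Pi.one_apply, ENNReal.toReal_one, Real.sqrt_one,
      Complex.ofReal_one, one_mul]
    rfl
  rw [U0, MemLp.toLp_congr _ (Lp.memLp ξ) h, Lp.toLp_coeFn]

theorem sw_cocycle (hf : Nice f) (hg : Nice g) :
    ∀ᵐ x, sw (f * g) x = sw f x * sw g (f.symm x) := by
  filter_upwards [w_cocycle hf hg, w_lt_top hf, (qmp_symm hf).ae (w_lt_top hg)]
    with x hx hx1 hx2
  rw [sw, hx, ENNReal.toReal_mul, Real.sqrt_mul ENNReal.toReal_nonneg]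
  rfl

theorem U0_mul (hf : Nice f) (hg : Nice g) (ξ : Lp ℂ 2 (volume : Measure ℝ)) :
    U0 (f * g) (hf.mul hg) ξ = U0 f hf (U0 g hg ξ) := by
  have key : Phi (f * g) ⇑ξ =ᵐ[volume] Phi f ⇑(U0 g hg ξ) := by
    refine Filter.EventuallyEq.trans ?_ (phi_congr hf (coeFn_U0 hg ξ)).symm
    filter_upwards [sw_cocycle hf hg] with x hx
    simp only [Phi, hx]
    have hsymm : (f * g).symm x = g.symm (f.symm x) := rfl
    rw [hsymm]
    push_cast
    ring
  exact MemLp.toLp_congr _ _ key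

/-- The weighted Koopman operator as a linear isometric equivalence of `L²`. -/
def U (f : Equiv.Perm ℝ) (hf : Nice f) :
    Lp ℂ 2 (volume : Measure ℝ) ≃ₗᵢ[ℂ] Lp ℂ 2 (volume : Measure ℝ) where
  toFun := U0 f hf
  invFun := U0 f⁻¹ hf.inv
  map_add' := U0_add hf
  map_smul' := U0_smul hf
  left_inv := fun ξ => by
    show U0 f⁻¹ hf.inv (U0 f hf ξ) = ξ
    rw [← U0_mul hf.inv hf, U0_congr_perm (inv_mul_cancel f) _ Nice.one, U0_one]
  right_inv := fun ξ => by
    show U0 f hf (U0 f⁻¹ hf.inv ξ) = ξ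
    rw [← U0_mul hf hf.inv, U0_congr_perm (mul_inv_cancel f) _ Nice.one, U0_one]
  norm_map' := norm_U0 hf

theorem U_apply (hf : Nice f) (ξ : Lp ℂ 2 (volume : Measure ℝ)) :
    U f hf ξ = U0 f hf ξ := rfl

theorem map_measure_eq {f : Equiv.Perm ℝ} (hf : Nice f) {u₀ : ℝ → ℂ}
    (hu₀ : Measurable u₀)
    (hPhi : ∀ᵐ x, Phi f u₀ x = u₀ x) :
    Measure.map ⇑f (volume.withDensity fun x => (‖u₀ x‖₊ : ℝ≥0∞) ^ (2:ℝ))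
      = volume.withDensity fun x => (‖u₀ x‖₊ : ℝ≥0∞) ^ (2:ℝ) := by
  set F : ℝ → ℝ≥0∞ := fun x => (‖u₀ x‖₊ : ℝ≥0∞) ^ (2:ℝ) with hFdef
  have hF : Measurable F :=
    ENNReal.continuous_rpow_const.measurable.comp hu₀.nnnorm.coe_nnreal_ennreal
  have hptwise : ∀ᵐ x, (w f * (F ∘ ⇑f.symm)) x = F x := by
    filter_upwards [hPhi, w_lt_top hf] with x h1 hx
    have := congrArg (fun z : ℂ => (‖z‖₊ : ℝ≥0∞) ^ (2:ℝ)) h1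
    simp only [Phi, nnnorm_mul, ENNReal.coe_mul] at this
    rw [ENNReal.mul_rpow_of_nonneg _ _ (by norm_num), enorm_sw_sq hx] at this
    exact this
  calc Measure.map ⇑f (volume.withDensity F)
      = (Measure.map ⇑f volume).withDensity (F ∘ ⇑f.symm) :=
        map_withDensity hf hF volume
    _ = (volume.withDensity (w f)).withDensity (F ∘ ⇑f.symm) := by
        rw [withDensity_w hf]; rfl
    _ = volume.withDensity (w f * (F ∘ ⇑f.symm)) :=
        (withDensity_mul _ measurable_w (hF.comp hf.measurable_symm)).symm
    _ = volume.withDensity F := withDensity_congr_ae hptwise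

theorem fixed_point_of_invariant_measure {G : Subgroup (Equiv.Perm ℝ)}
    (hN : ∀ g : G, Nice ((g : Equiv.Perm ℝ)))
    (μ : Measure ℝ) (hm0 : μ Set.univ ≠ 0) (hmtop : μ Set.univ ≠ ∞)
    (hmap : ∀ g : G, Measure.map ⇑(g : Equiv.Perm ℝ) μ = μ) :
    ∃ x₀ : ℝ, ∀ g ∈ G, g x₀ = x₀ := by
  set m := μ Set.univ with hm
  set A : Set ℝ := {x : ℝ | μ (Iic x) ≤ m / 2} with hA
  have hABdd : BddAbove A := by
    have hun : (⋃ n : ℕ, Iic ((n : ℝ))) = Set.univ := by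
      ext x
      simp only [mem_iUnion, mem_Iic, mem_univ, iff_true]
      exact exists_nat_ge x
    have htend : Tendsto (fun n : ℕ => μ (Iic (n : ℝ))) atTop (𝓝 m) := by
      have := tendsto_measure_iUnion_atTop (μ := μ)
        (s := fun n : ℕ => Iic ((n : ℝ)))
        (fun a b hab => Iic_subset_Iic.2 (by exact_mod_cast hab))
      rwa [hun] at this
    have hhalf : m / 2 < m := ENNReal.half_lt_self hm0 hmtop
    obtain ⟨n, hn⟩ := (htend.eventually (eventually_gt_nhds hhalf)).exists
    refine ⟨(n : ℝ), fun y hy => ?_⟩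
    by_contra hyn
    push_neg at hyn
    exact absurd (le_trans (measure_mono (Iic_subset_Iic.2 hyn.le)) hy) (not_le.2 hn)
  have hAne : A.Nonempty := by
    have hint : (⋂ n : ℕ, Iic (-(n : ℝ))) = (∅ : Set ℝ) := by
      ext x
      simp only [mem_iInter, mem_Iic, mem_empty_iff_false, iff_false, not_forall, not_le]
      obtain ⟨n, hn⟩ := exists_nat_gt (-x)
      exact ⟨n, by linarith⟩
    have htend : Tendsto (fun n : ℕ => μ (Iic (-(n : ℝ)))) atTop (𝓝 0) := by
      have := tendsto_measure_iInter_atTop (μ := μ)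
        (s := fun n : ℕ => Iic (-(n : ℝ)))
        (fun n => (measurableSet_Iic).nullMeasurableSet)
        (fun a b hab => Iic_subset_Iic.2 (by exact_mod_cast neg_le_neg (by exact_mod_cast hab)))
        ⟨0, ((measure_mono (subset_univ _)).trans_lt (lt_top_iff_ne_top.2 hmtop)).ne⟩
      rwa [hint, measure_empty] at this
    have hpos : (0 : ℝ≥0∞) < m / 2 := ENNReal.div_pos hm0 (by norm_num)
    obtain ⟨n, hn⟩ := (htend.eventually (eventually_lt_nhds hpos)).exists
    exact ⟨-(n : ℝ), hn.le⟩
  refine ⟨sSup A, fun g hg => ?_⟩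
  set f : Equiv.Perm ℝ := g with hfdef
  have hf : Nice f := hN ⟨g, hg⟩
  have key : ∀ x : ℝ, μ (Iic (f x)) = μ (Iic x) := by
    intro x
    have h1 : μ (Iic (f x)) = (Measure.map ⇑f μ) (Iic (f x)) := by
      rw [hmap ⟨g, hg⟩]
    rw [h1, Measure.map_apply hf.measurable measurableSet_Iic]
    congr 1
    ext y
    simp only [mem_preimage, mem_Iic]
    exact ⟨fun h => (hf.1.le_iff_le).1 h, fun h => hf.1.monotone h⟩
  have hmemiff : ∀ x : ℝ, f x ∈ A ↔ x ∈ A := by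
    intro x
    simp only [hA, mem_setOf_eq, key x]
  have himg : ⇑f '' A = A := by
    ext y
    constructor
    · rintro ⟨x, hx, rfl⟩
      exact (hmemiff x).2 hx
    · intro hy
      refine ⟨f.symm y, ?_, f.apply_symm_apply y⟩
      have := hmemiff (f.symm y)
      rw [f.apply_symm_apply] at this
      exact this.1 hy
  set e : ℝ ≃o ℝ := StrictMono.orderIsoOfSurjective ⇑f hf.1 f.surjective with he
  have hcoe : ⇑e = ⇑f := rfl
  have : e (sSup A) = sSup (⇑e '' A) := OrderIso.map_csSup' e hAne hABdd
  rw [hcoe, himg] at this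
  exact this

theorem invariant_eq_zero {G : Subgroup (Equiv.Perm ℝ)}
    (hN : ∀ g : G, Nice ((g : Equiv.Perm ℝ)))
    (hNF : ¬ ∃ x₀ : ℝ, ∀ g ∈ G, g x₀ = x₀)
    (η : Lp ℂ 2 (volume : Measure ℝ))
    (hinv : ∀ g : G, U0 (g : Equiv.Perm ℝ) (hN g) η = η) : η = 0 := by
  by_contra hne
  have sm := Lp.aestronglyMeasurable η
  set u₀ : ℝ → ℂ := sm.mk ⇑η with hu₀def
  have hu₀ : Measurable u₀ := sm.stronglyMeasurable_mk.measurable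
  have heq : ⇑η =ᵐ[volume] u₀ := sm.ae_eq_mk
  set F : ℝ → ℝ≥0∞ := fun x => (‖u₀ x‖₊ : ℝ≥0∞) ^ (2:ℝ) with hFdef
  set μ : Measure ℝ := volume.withDensity F with hmu
  have hFeq : ∫⁻ x, F x = ∫⁻ x, (‖(⇑η : ℝ → ℂ) x‖₊ : ℝ≥0∞) ^ (2:ℝ) := by
    refine lintegral_congr_ae ?_
    filter_upwards [heq] with x hx
    rw [hx]
  have hlim : ∫⁻ x, (‖(⇑η : ℝ → ℂ) x‖₊ : ℝ≥0∞) ^ (2:ℝ) ≠ ∞ := by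
    have h1 := Lp.eLpNorm_ne_top η
    rw [eLpNorm_eq_lintegral_rpow_enorm_toReal two_ne_zero ENNReal.ofNat_ne_top] at h1
    simp only [enorm_eq_nnnorm] at h1
    intro hcon
    rw [show ((2:ℝ≥0∞)).toReal = (2:ℝ) by simp, hcon] at h1
    simp [ENNReal.top_rpow_of_pos] at h1
  have hm0 : μ Set.univ ≠ 0 := by
    intro hcon
    rw [hmu, withDensity_apply _ MeasurableSet.univ, Measure.restrict_univ] at hcon
    rw [hFeq] at hcon
    have : (fun x => (‖(⇑η : ℝ → ℂ) x‖₊ : ℝ≥0∞) ^ (2:ℝ)) =ᵐ[volume] 0 := by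
      rw [← lintegral_eq_zero_iff' ]
      · exact hcon
      · exact ENNReal.continuous_rpow_const.measurable.comp_aemeasurable
          (Lp.aestronglyMeasurable η).aemeasurable.nnnorm.coe_nnreal_ennreal
    have hzero : ⇑η =ᵐ[volume] 0 := by
      filter_upwards [this] with x hx
      simp only [Pi.zero_apply] at hx ⊢
      have : (‖(⇑η : ℝ → ℂ) x‖₊ : ℝ≥0∞) = 0 := by
        by_contra hne2
        rw [ENNReal.rpow_eq_zero_iff] at hx
        rcases hx with ⟨h, -⟩ | ⟨h, -⟩
        · exact hne2 h
        · exact (ENNReal.coe_ne_top) h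
      simpa using this
    exact hne (Lp.eq_zero_iff_ae_eq_zero.2 hzero)
  have hmtop : μ Set.univ ≠ ∞ := by
    rw [hmu, withDensity_apply _ MeasurableSet.univ, Measure.restrict_univ, hFeq]
    exact hlim
  have hmap : ∀ g : G, Measure.map ⇑(g : Equiv.Perm ℝ) μ = μ := by
    intro g
    refine map_measure_eq (hN g) hu₀ ?_
    have h1 : ⇑(U0 (g : Equiv.Perm ℝ) (hN g) η) =ᵐ[volume] Phi (g : Equiv.Perm ℝ) ⇑η :=
      coeFn_U0 (hN g) η
    rw [hinv g] at h1
    have h2 : Phi (g : Equiv.Perm ℝ) ⇑η =ᵐ[volume] Phi (g : Equiv.Perm ℝ) u₀ :=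
      phi_congr (hN g) heq
    filter_upwards [h1, h2, heq] with x hx1 hx2 hx3
    rw [← hx2, hx1.symm, hx3]
  exact hNF (fixed_point_of_invariant_measure hN μ hm0 hmtop hmap)

end Nice

section LipConst

theorem isBiLipschitzWith_lipConst {f : ℝ → ℝ} (hf : IsBiLipschitz f) :
    IsBiLipschitzWith (lipConst f) f := by
  obtain ⟨L₀, hL₀⟩ := hf
  have hne : {L : ℝ | IsBiLipschitzWith L f}.Nonempty := ⟨L₀, hL₀⟩
  have h1 : 1 ≤ lipConst f := le_csInf hne fun L hL => hL.1
  have helper : ∀ c d : ℝ, 0 ≤ d → (∀ L ∈ {L : ℝ | IsBiLipschitzWith L f}, c ≤ L * d) →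
      c ≤ lipConst f * d := by
    intro c d hd h
    rcases hd.eq_or_lt with hd0 | hd0
    · have h0 := h L₀ hL₀
      rw [← hd0] at h0 ⊢
      simpa using h0
    · have hdiv : c / d ≤ lipConst f := le_csInf hne fun L hL => by
        rw [div_le_iff₀ hd0]
        exact h L hL
      calc c = c / d * d := by field_simp
        _ ≤ lipConst f * d := mul_le_mul_of_nonneg_right hdiv hd
  refine ⟨h1, fun x y => ⟨?_, ?_⟩⟩
  · have key : |x - y| ≤ lipConst f * |f x - f y| := by
      refine helper _ _ (abs_nonneg _) fun L hL => ?_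
      have hLpos : (0:ℝ) < L := lt_of_lt_of_le zero_lt_one hL.1
      calc |x - y| = L * (L⁻¹ * |x - y|) := by field_simp
        _ ≤ L * |f x - f y| := mul_le_mul_of_nonneg_left (hL.2 x y).1 hLpos.le
    have hpos : (0:ℝ) < lipConst f := lt_of_lt_of_le zero_lt_one h1
    rw [inv_mul_le_iff₀ hpos]
    exact key
  · exact helper _ _ (abs_nonneg _) fun L hL => (hL.2 x y).2

theorem IsBiLipschitzWith.lipschitzWith {L : ℝ} {f : ℝ → ℝ} (h : IsBiLipschitzWith L f) :
    LipschitzWith L.toNNReal f := by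
  refine LipschitzWith.of_dist_le_mul fun x y => ?_
  rw [Real.dist_eq, Real.dist_eq, Real.coe_toNNReal _ (by linarith [h.1])]
  exact (h.2 x y).2

theorem IsBiLipschitzWith.lipschitzWith_symm {L : ℝ} {f : Equiv.Perm ℝ}
    (h : IsBiLipschitzWith L ⇑f) : LipschitzWith L.toNNReal ⇑f.symm := by
  have hL : (0:ℝ) < L := lt_of_lt_of_le zero_lt_one h.1
  refine LipschitzWith.of_dist_le_mul fun x y => ?_
  rw [Real.dist_eq, Real.dist_eq, Real.coe_toNNReal _ hL.le]
  have h1 := (h.2 (f.symm x) (f.symm y)).1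
  rw [f.apply_symm_apply, f.apply_symm_apply] at h1
  calc |f.symm x - f.symm y| = L * (L⁻¹ * |f.symm x - f.symm y|) := by field_simp
    _ ≤ L * |x - y| := mul_le_mul_of_nonneg_left h1 hL.le

theorem MemBiLipBdd.nice {f : Equiv.Perm ℝ} (h : MemBiLipBdd f) : Nice f := by
  have hbl := isBiLipschitzWith_lipConst h.2.1
  exact ⟨h.1, (lipConst ⇑f).toNNReal, hbl.lipschitzWith, hbl.lipschitzWith_symm⟩

theorem one_le_lipConst {f : Equiv.Perm ℝ} (h : MemBiLipBdd f) : 1 ≤ lipConst ⇑f :=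
  (isBiLipschitzWith_lipConst h.2.1).1

end LipConst

namespace Nice

/-- The real-valued normalized indicator of `[0, T]`. -/
def indR (T : ℝ) : ℝ → ℝ := (Set.Icc (0:ℝ) T).indicator fun _ => (Real.sqrt T)⁻¹

theorem indR_nonneg (T x : ℝ) : 0 ≤ indR T x :=
  Set.indicator_nonneg (fun _ _ => inv_nonneg.2 (Real.sqrt_nonneg T)) x

/-- The normalized indicator as a complex-valued function. -/
def uT (T : ℝ) : ℝ → ℂ := fun x => ((indR T x : ℝ) : ℂ)

theorem uT_eq_indicator (T : ℝ) :
    uT T = (Set.Icc (0:ℝ) T).indicator fun _ => (((Real.sqrt T)⁻¹ : ℝ) : ℂ) := by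
  funext x
  by_cases hx : x ∈ Set.Icc (0:ℝ) T <;> simp [uT, indR, hx]

theorem memLp_uT (T : ℝ) : MemLp (uT T) 2 volume := by
  rw [uT_eq_indicator]
  refine memLp_indicator_const 2 measurableSet_Icc _ (Or.inr ?_)
  simp [Real.volume_Icc]

/-- The normalized indicator of `[0,T]` as an element of `L²`. -/
def xiT (T : ℝ) : Lp ℂ 2 (volume : Measure ℝ) := (memLp_uT T).toLp _

theorem norm_xiT {T : ℝ} (hT : 0 < T) : ‖xiT T‖ = 1 := by
  have hsq : Real.sqrt T ≠ 0 := ne_of_gt (Real.sqrt_pos.2 hT)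
  rw [xiT, Lp.norm_toLp, uT_eq_indicator,
    eLpNorm_indicator_const measurableSet_Icc two_ne_zero ENNReal.ofNat_ne_top]
  rw [Real.volume_Icc, sub_zero]
  rw [show ((2:ℝ≥0∞)).toReal = (2:ℝ) by simp]
  rw [ENNReal.toReal_mul, ← ENNReal.toReal_rpow]
  rw [toReal_enorm, ENNReal.toReal_ofReal hT.le]
  rw [Complex.norm_real, Real.norm_eq_abs,
    abs_of_nonneg (inv_nonneg.2 (Real.sqrt_nonneg T))]
  rw [show T ^ (1/(2:ℝ)) = Real.sqrt T from (Real.sqrt_eq_rpow T).symm]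
  exact inv_mul_cancel₀ hsq

theorem displacement_symm {f : Equiv.Perm ℝ} {C : ℝ} (hC : ∀ x, |f x - x| ≤ C) (x : ℝ) :
    |f.symm x - x| ≤ C := by
  have h := hC (f.symm x)
  rw [f.apply_symm_apply] at h
  rwa [abs_sub_comm] at h

theorem re_inner_bound {f : Equiv.Perm ℝ} (h : MemBiLipBdd f) {C T : ℝ}
    (hC : ∀ x, |f x - x| ≤ C) (hT : 0 < T) (hTC : 2 * C ≤ T) :
    (Real.sqrt (lipConst ⇑f))⁻¹ * (1 - 2*C/T)
      ≤ RCLike.re (inner (𝕜 := ℂ) (U0 f h.nice (xiT T)) (xiT T)) := by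
  have hbl := isBiLipschitzWith_lipConst h.2.1
  set L := lipConst ⇑f with hLdef
  have hL1 : (1:ℝ) ≤ L := hbl.1
  have hLpos : (0:ℝ) < L := by linarith
  have hC0 : (0:ℝ) ≤ C := le_trans (abs_nonneg _) (hC 0)
  have hnice : Nice f := h.nice
  have hcoexi : ⇑(xiT T) =ᵐ[volume] uT T := MemLp.coeFn_toLp _
  have hInt := L2.integrable_inner (𝕜 := ℂ) (U0 f h.nice (xiT T)) (xiT T)
  set V : ℝ → ℝ := fun x => sw f x * (indR T (f.symm x) * indR T x) with hVdef
  have hae : (fun x => RCLike.re (inner (𝕜:=ℂ) (⇑(U0 f h.nice (xiT T)) x) (⇑(xiT T) x)))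
      =ᵐ[volume] V := by
    filter_upwards [coeFn_U0 h.nice (xiT T), hcoexi,
      (qmp_symm hnice).ae hcoexi] with x h1 h2 h3
    rw [h1, show Phi f (⇑(xiT T)) x = (sw f x : ℂ) * (⇑(xiT T)) (f.symm x) from rfl, h3, h2]
    simp only [uT, RCLike.inner_apply, map_mul, Complex.conj_ofReal, ← Complex.ofReal_mul,
      RCLike.re_to_complex, Complex.ofReal_re]
    ring
  have hre : RCLike.re (inner (𝕜:=ℂ) (U0 f h.nice (xiT T)) (xiT T)) = ∫ x, V x := by
    rw [L2.inner_def, ← integral_re hInt]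
    exact integral_congr_ae hae
  set s : ℝ → ℝ := (Set.Icc C (T-C)).indicator fun _ => (Real.sqrt L)⁻¹ * T⁻¹ with hsdef
  have hs_int : Integrable s := by
    rw [hsdef, integrable_indicator_iff measurableSet_Icc]
    exact integrableOn_const (by simp [Real.volume_Icc])
  have hV_int : Integrable V := hInt.re.congr hae
  have hle : ∀ᵐ x, s x ≤ V x := by
    have hLNN : (L.toNNReal : ℝ≥0) ≠ 0 := by
      simp only [ne_eq, Real.toNNReal_eq_zero, not_le]
      linarith
    filter_upwards [le_w hnice hLNN hbl.lipschitzWith, w_lt_top hnice] with x hwge hwlt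
    by_cases hx : x ∈ Set.Icc C (T-C)
    · rw [hsdef, Set.indicator_of_mem hx]
      have hx0T : x ∈ Set.Icc (0:ℝ) T := ⟨le_trans hC0 hx.1, le_trans hx.2 (by linarith)⟩
      have hd : |f.symm x - x| ≤ C := displacement_symm hC x
      obtain ⟨hd1, hd2⟩ := abs_le.1 hd
      have hsymm_mem : f.symm x ∈ Set.Icc (0:ℝ) T :=
        ⟨by have := hx.1; linarith, by have := hx.2; linarith⟩
      have hV : V x = sw f x * T⁻¹ := by
        rw [hVdef]
        simp only [indR, Set.indicator_of_mem hsymm_mem, Set.indicator_of_mem hx0T]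
        rw [← mul_inv, Real.mul_self_sqrt hT.le]
      rw [hV]
      have hsw : (Real.sqrt L)⁻¹ ≤ sw f x := by
        rw [← Real.sqrt_inv]
        apply Real.sqrt_le_sqrt
        have h1 : ((L.toNNReal : ℝ≥0∞))⁻¹.toReal ≤ (w f x).toReal :=
          ENNReal.toReal_mono hwlt.ne hwge
        rwa [ENNReal.toReal_inv, ENNReal.coe_toReal, Real.coe_toNNReal _ hLpos.le] at h1
      exact mul_le_mul_of_nonneg_right hsw (inv_nonneg.2 hT.le)
    · rw [hsdef, Set.indicator_of_notMem hx]
      exact mul_nonneg (sw_nonneg x) (mul_nonneg (indR_nonneg _ _) (indR_nonneg _ _))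
  have hint_s : ∫ x, s x = (Real.sqrt L)⁻¹ * (1 - 2*C/T) := by
    rw [hsdef, integral_indicator_const _ measurableSet_Icc,
      Real.volume_real_Icc_of_le (by linarith), smul_eq_mul]
    field_simp
    ring
  rw [hre, ← hint_s]
  exact integral_mono_ae hs_int hV_int hle

theorem sqrt_add_le {x y : ℝ} (hx : 0 ≤ x) (hy : 0 ≤ y) :
    Real.sqrt (x + y) ≤ Real.sqrt x + Real.sqrt y := by
  have h1 : x + y ≤ (Real.sqrt x + Real.sqrt y) ^ 2 := by
    have := Real.sq_sqrt hx
    have := Real.sq_sqrt hy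
    nlinarith [Real.sqrt_nonneg x, Real.sqrt_nonneg y]
  calc Real.sqrt (x + y) ≤ Real.sqrt ((Real.sqrt x + Real.sqrt y) ^ 2) :=
        Real.sqrt_le_sqrt h1
    _ = Real.sqrt x + Real.sqrt y :=
        Real.sqrt_sq (by positivity)

theorem norm_U0_sub_xiT_le {f : Equiv.Perm ℝ} (h : MemBiLipBdd f) {C T : ℝ}
    (hC : ∀ x, |f x - x| ≤ C) (hT : 0 < T) (hTC : 2 * C ≤ T) :
    ‖U0 f h.nice (xiT T) - xiT T‖
      ≤ Real.sqrt 2 * Real.sqrt (1 - (Real.sqrt (lipConst ⇑f))⁻¹) + Real.sqrt (4*C/T) := by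
  have hre := re_inner_bound h hC hT hTC
  have hnorm1 : ‖U0 f h.nice (xiT T)‖ = 1 := by rw [norm_U0]; exact norm_xiT hT
  have hnorm2 : ‖xiT T‖ = 1 := norm_xiT hT
  set a := (Real.sqrt (lipConst ⇑f))⁻¹ with hadef
  have hL1 : (1:ℝ) ≤ lipConst ⇑f := one_le_lipConst h
  have ha0 : 0 ≤ a := inv_nonneg.2 (Real.sqrt_nonneg _)
  have ha1 : a ≤ 1 := by
    rw [hadef]
    refine inv_le_one_of_one_le₀ ?_
    rw [show (1:ℝ) = Real.sqrt 1 from Real.sqrt_one.symm]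
    exact Real.sqrt_le_sqrt hL1
  have hC0 : (0:ℝ) ≤ C := le_trans (abs_nonneg _) (hC 0)
  have hsq : ‖U0 f h.nice (xiT T) - xiT T‖ ^ 2
      = 2 - 2 * RCLike.re (inner (𝕜:=ℂ) (U0 f h.nice (xiT T)) (xiT T)) := by
    rw [@norm_sub_sq ℂ, hnorm1, hnorm2]
    ring
  have hbound : ‖U0 f h.nice (xiT T) - xiT T‖ ^ 2 ≤ 2 * (1 - a) + 4*C/T := by
    rw [hsq]
    have hr0 : 0 ≤ C / T := div_nonneg hC0 hT.le
    have h3 : a * (C/T) ≤ C/T := by nlinarith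
    have h4 : a * (1 - 2*C/T) = a - 2 * (a * (C/T)) := by ring
    have h5 : (2:ℝ) * (1 - a) + 4*C/T = 2 - 2*a + 4*(C/T) := by ring
    rw [h5]
    nlinarith [hre, h3, h4]
  calc ‖U0 f h.nice (xiT T) - xiT T‖
      = Real.sqrt (‖U0 f h.nice (xiT T) - xiT T‖ ^ 2) := (Real.sqrt_sq (norm_nonneg _)).symm
    _ ≤ Real.sqrt (2 * (1 - a) + 4*C/T) := Real.sqrt_le_sqrt hbound
    _ ≤ Real.sqrt (2 * (1 - a)) + Real.sqrt (4*C/T) := by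
        refine sqrt_add_le (by nlinarith) (by positivity)
    _ = Real.sqrt 2 * Real.sqrt (1 - a) + Real.sqrt (4*C/T) := by
        rw [Real.sqrt_mul (by norm_num)]

theorem v_eq {f : Equiv.Perm ℝ} (h : MemBiLipBdd f) :
    Real.sqrt 2 * (1 - lipConst ⇑f ^ (-(1 / 2 : ℝ))) ^ (1 / 2 : ℝ)
      = Real.sqrt 2 * Real.sqrt (1 - (Real.sqrt (lipConst ⇑f))⁻¹) := by
  have hL1 : 1 ≤ lipConst ⇑f := one_le_lipConst h
  have h1 : lipConst ⇑f ^ (-(1 / 2 : ℝ)) = (Real.sqrt (lipConst ⇑f))⁻¹ := by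
    rw [Real.rpow_neg (by linarith), ← Real.sqrt_eq_rpow]
  rw [h1, ← Real.sqrt_eq_rpow]

theorem v_nonneg {f : Equiv.Perm ℝ} (h : MemBiLipBdd f) :
    0 ≤ Real.sqrt 2 * (1 - lipConst ⇑f ^ (-(1 / 2 : ℝ))) ^ (1 / 2 : ℝ) := by
  rw [v_eq h]
  positivity

theorem v_le_sqrt_two {f : Equiv.Perm ℝ} (h : MemBiLipBdd f) :
    Real.sqrt 2 * (1 - lipConst ⇑f ^ (-(1 / 2 : ℝ))) ^ (1 / 2 : ℝ) ≤ Real.sqrt 2 := by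
  rw [v_eq h]
  have h2 : Real.sqrt (1 - (Real.sqrt (lipConst ⇑f))⁻¹) ≤ 1 := by
    rw [show (1:ℝ) = Real.sqrt 1 from Real.sqrt_one.symm]
    apply Real.sqrt_le_sqrt
    have : 0 ≤ (Real.sqrt (lipConst ⇑f))⁻¹ := inv_nonneg.2 (Real.sqrt_nonneg _)
    simp only [Real.sqrt_one]
    linarith
  calc Real.sqrt 2 * Real.sqrt (1 - (Real.sqrt (lipConst ⇑f))⁻¹)
      ≤ Real.sqrt 2 * 1 := mul_le_mul_of_nonneg_left h2 (Real.sqrt_nonneg 2)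
    _ = Real.sqrt 2 := mul_one _

end Nice

/-- Let `G ≤ BiLip₊ᵇᵈ(ℝ)` be finitely generated without global fixed
points and with Property (T). For every finite generating set `S` and every `ε > 0`
such that `(S, ε)` is a Kazhdan pair, `ε ≤ max_{g ∈ S} √2·(1 − Lip(g)^{−1/2})^{1/2}`. -/
theorem statement8 (G : Subgroup (Equiv.Perm ℝ)) (hFG : Group.FG G)
    (hBL : ∀ g ∈ G, MemBiLipBdd g)
    (hNF : ¬ ∃ x₀ : ℝ, ∀ g ∈ G, g x₀ = x₀)
    (hT : HasPropertyT G)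
    (S : Set G) (hSfin : S.Finite) (hSgen : Subgroup.closure S = ⊤)
    (ε : ℝ) (hε : 0 < ε) (hK : IsKazhdanPair G S ε) :
    ε ≤ ⨆ g ∈ S, Real.sqrt 2 *
      (1 - lipConst ⇑(g : Equiv.Perm ℝ) ^ (-(1 / 2 : ℝ))) ^ (1 / 2 : ℝ) := by
  classical
  have hN : ∀ g : G, Nice ((g : Equiv.Perm ℝ)) := fun g => (hBL ↑g g.2).nice
  -- `S` is nonempty
  have hSne : S.Nonempty := by
    rcases Set.eq_empty_or_nonempty S with hS | hS
    · exfalso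
      apply hNF
      refine ⟨0, fun g hg => ?_⟩
      have hmem : (⟨g, hg⟩ : G) ∈ Subgroup.closure (∅ : Set G) := by
        rw [← hS, hSgen]; exact Subgroup.mem_top _
      rw [Subgroup.closure_empty, Subgroup.mem_bot] at hmem
      have hg1 : g = 1 := congrArg Subtype.val hmem
      rw [hg1]
      rfl
    · exact hS
  obtain ⟨g₀, hg₀⟩ := hSne
  -- the unitary representation
  set π : G →* (Lp ℂ 2 (volume : Measure ℝ) ≃ₗᵢ[ℂ] Lp ℂ 2 (volume : Measure ℝ)) :=
    MonoidHom.mk' (fun g => Nice.U (g : Equiv.Perm ℝ) (hN g)) (by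
      intro a b
      refine LinearIsometryEquiv.ext fun ξ => ?_
      show Nice.U0 ((a * b : G) : Equiv.Perm ℝ) (hN (a * b)) ξ
        = Nice.U0 ((a : G) : Equiv.Perm ℝ) (hN a) (Nice.U0 ((b : G) : Equiv.Perm ℝ) (hN b) ξ)
      rw [Nice.U0_congr_perm (show ((a*b : G) : Equiv.Perm ℝ) = ↑a * ↑b from rfl) _
        ((hN a).mul (hN b))]
      exact Nice.U0_mul (hN a) (hN b) ξ) with hπ
  -- uniform displacement bound on S
  obtain ⟨Cm, hCm0, hCm⟩ : ∃ Cm : ℝ, 0 ≤ Cm ∧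
      ∀ g ∈ S, ∀ x : ℝ, |(g : Equiv.Perm ℝ) x - x| ≤ Cm := by
    have hD : ∀ g : G, ∃ C, ∀ x, |(g : Equiv.Perm ℝ) x - x| ≤ C := fun g => (hBL ↑g g.2).2.2
    choose D hDs using hD
    have htne : hSfin.toFinset.Nonempty := ⟨g₀, hSfin.mem_toFinset.2 hg₀⟩
    refine ⟨max 0 (hSfin.toFinset.sup' htne D), le_max_left _ _, fun g hg x => ?_⟩
    refine le_trans (hDs g x) (le_trans ?_ (le_max_right _ _))
    exact Finset.le_sup' D (hSfin.mem_toFinset.2 hg)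
  -- the right-hand side
  set R := ⨆ g ∈ S, Real.sqrt 2 *
      (1 - lipConst ⇑(g : Equiv.Perm ℝ) ^ (-(1 / 2 : ℝ))) ^ (1 / 2 : ℝ) with hRdef
  have hbdd : BddAbove (Set.range fun g : G => ⨆ _ : g ∈ S, Real.sqrt 2 *
      (1 - lipConst ⇑(g : Equiv.Perm ℝ) ^ (-(1 / 2 : ℝ))) ^ (1 / 2 : ℝ)) := by
    refine ⟨Real.sqrt 2, ?_⟩
    rintro - ⟨g, rfl⟩
    dsimp only
    by_cases hg : g ∈ S
    · rw [ciSup_pos hg]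
      exact Nice.v_le_sqrt_two (hBL ↑g g.2)
    · haveI : IsEmpty (g ∈ S) := ⟨hg⟩
      rw [Real.iSup_of_isEmpty]
      positivity
  have hRge : ∀ g ∈ S, Real.sqrt 2 *
      (1 - lipConst ⇑(g : Equiv.Perm ℝ) ^ (-(1 / 2 : ℝ))) ^ (1 / 2 : ℝ) ≤ R := by
    intro g hg
    have h1 := le_ciSup hbdd g
    rwa [ciSup_pos hg] at h1
  have hR0 : 0 ≤ R := le_trans (Nice.v_nonneg (hBL ↑g₀ g₀.2)) (hRge g₀ hg₀)
  -- it suffices to prove `ε ≤ R + δ` for all positive `δ`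
  refine le_of_forall_pos_le_add fun δ hδ => ?_
  -- choice of T
  set T : ℝ := max (2*Cm + 1) ((4*Cm + 1)/δ^2) with hTdef
  have hTpos : 0 < T := lt_of_lt_of_le (by linarith) (le_max_left _ _)
  have hTC : 2 * Cm ≤ T := le_trans (by linarith) (le_max_left _ _)
  have hδ2 : (0:ℝ) < δ^2 := by positivity
  have hdTle : Real.sqrt (4*Cm/T) ≤ δ := by
    have h1 : (4*Cm + 1)/δ^2 ≤ T := le_max_right _ _
    have h2 : 4*Cm + 1 ≤ T * δ^2 := by
      rw [div_le_iff₀ hδ2] at h1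
      exact h1
    have h3 : 4*Cm/T ≤ δ^2 := by
      rw [div_le_iff₀ hTpos]
      nlinarith
    calc Real.sqrt (4*Cm/T) ≤ Real.sqrt (δ^2) := Real.sqrt_le_sqrt h3
      _ = δ := Real.sqrt_sq hδ.le
  -- Kazhdan inequality applied to the test vector
  have horth : ∀ η : Lp ℂ 2 (volume : Measure ℝ),
      (∀ g : G, π g η = η) → inner ℂ (Nice.xiT T) η = (0:ℂ) := by
    intro η hη
    have hzero : η = 0 := Nice.invariant_eq_zero hN hNF η (fun g => hη g)
    rw [hzero, inner_zero_right]
  have hkaz := hK.2.2 (Lp ℂ 2 (volume : Measure ℝ)) π (Nice.xiT T) horth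
  rw [Nice.norm_xiT hTpos, mul_one] at hkaz
  refine le_trans hkaz ?_
  -- bound the supremum
  refine ciSup_le fun g => ?_
  by_cases hg : g ∈ S
  · rw [ciSup_pos hg]
    have hb := Nice.norm_U0_sub_xiT_le (hBL ↑g g.2) (hCm g hg) hTpos hTC
    have hπg : π g (Nice.xiT T) = Nice.U0 (g : Equiv.Perm ℝ) ((hBL ↑g g.2).nice) (Nice.xiT T) :=
      rfl
    calc ‖π g (Nice.xiT T) - Nice.xiT T‖
        ≤ Real.sqrt 2 * Real.sqrt (1 - (Real.sqrt (lipConst ⇑(g : Equiv.Perm ℝ)))⁻¹)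
          + Real.sqrt (4*Cm/T) := by rw [hπg]; exact hb
      _ ≤ Real.sqrt 2 * (1 - lipConst ⇑(g : Equiv.Perm ℝ) ^ (-(1 / 2 : ℝ))) ^ (1 / 2 : ℝ)
          + δ := by
            rw [Nice.v_eq (hBL ↑g g.2)]
            exact add_le_add_right hdTle _
      _ ≤ R + δ := add_le_add_left (hRge g hg) δ
  · haveI : IsEmpty (g ∈ S) := ⟨hg⟩
    rw [Real.iSup_of_isEmpty]
    linarith

end
end
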